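/- Let ū solve the weak differential filter problem (ū, v) + δ²(∇ū, ∇v) = (u, v) for all v ∈ H¹₀(Ω), and define the fluctuation u' := u − ū. Then (u', u) = ‖u'‖²_{L²} + δ²‖∇ū‖²_{L²} ≥ 0. -/

import Mathlib

/-- abstract Hilbert-space formulation: with `ū` solving the weak
differential-filter problem `(ū, v) + δ²(∇ū, ∇v) = (u, v)` for all `v`, the
fluctuation `u' = u − ū` satisfies `(u', u) = ‖u'‖² + δ²‖∇ū‖² ≥ 0`. -/
theorem differential_filter_fluctuation_dissipative
    {V H W : Type*} [NormedAddCommGroup V] [InnerProductSpace ℝ V]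
    [NormedAddCommGroup H] [InnerProductSpace ℝ H]
    [NormedAddCommGroup W] [InnerProductSpace ℝ W]
    (ι : V →ₗ[ℝ] H) (grad : V →ₗ[ℝ] W) (δ : ℝ) (hδ : 0 < δ)
    (u : H) (ubar : V)
    (hweak : ∀ v : V,
      inner ℝ (ι ubar) (ι v) + δ ^ 2 * inner ℝ (grad ubar) (grad v)
        = (inner ℝ u (ι v) : ℝ)) :
    (inner ℝ (u - ι ubar) u : ℝ) = ‖u - ι ubar‖ ^ 2 + δ ^ 2 * ‖grad ubar‖ ^ 2 ∧
      0 ≤ (inner ℝ (u - ι ubar) u : ℝ) := by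
  have h := hweak ubar
  have hkey : (inner ℝ (u - ι ubar) (ι ubar) : ℝ) = δ ^ 2 * ‖grad ubar‖ ^ 2 := by
    rw [inner_sub_left]
    have hg : (inner ℝ (grad ubar) (grad ubar) : ℝ) = ‖grad ubar‖ ^ 2 :=
      real_inner_self_eq_norm_sq _
    rw [hg] at h; linarith
  have hmain : (inner ℝ (u - ι ubar) u : ℝ)
      = ‖u - ι ubar‖ ^ 2 + δ ^ 2 * ‖grad ubar‖ ^ 2 := by
    have : u = (u - ι ubar) + ι ubar := by abel
    calc (inner ℝ (u - ι ubar) u : ℝ)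
        = inner ℝ (u - ι ubar) ((u - ι ubar) + ι ubar) := by rw [← this]
      _ = ‖u - ι ubar‖ ^ 2 + δ ^ 2 * ‖grad ubar‖ ^ 2 := by
          rw [inner_add_right, hkey, real_inner_self_eq_norm_sq]
  refine ⟨hmain, hmain ▸ by positivity⟩
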